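/- arXiv:math/0606203 — 4 statements merged into one kernel-verified Lean document; each statement's English description precedes it below -/
import Mathlib

section
/- Let G be a topological group and let π be a strongly continuous unitary representation of G on a complex Hilbert space H. Let (u_i) be a sequence in G converging to the identity element, let (g_i) be a sequence in G, and assume that the conjugates g_i u_i g_i^{-1} converge to an element h in G. Let v, w ∈ H and assume that π(g_i)v converges weakly to w in H. Then π(h)w = w. (This is the group-theoretic content of Lemma 1 of the paper: there, u_i = exp(tU_i) with U_i → 0 in the Lie algebra, and g_i u_i g_i^{-1} = exp(t(Ad g_i)U_i) → exp(tX) = h.) -/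
/-!
Write `cᵢ = gᵢ uᵢ gᵢ⁻¹`. The vectors `π(cᵢ) π(gᵢ) v` have two weak limits. On the one hand
`π(cᵢ) → π(h)` strongly and `π(gᵢ) v ⇀ w` with bounded norms, so they tend weakly to `π(h) w`.
On the other hand they equal `π(gᵢ) π(uᵢ) v`, which stays within `‖π(uᵢ) v - v‖ → 0` of
`π(gᵢ) v`, so they tend weakly to `w`.
-/

open Filter Topology

section WeakConvergence

variable {𝕜 E ι : Type*} [RCLike 𝕜] [NormedAddCommGroup E] [InnerProductSpace 𝕜 E]
  {l : Filter ι}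

local notation "⟪" x ", " y "⟫" => @inner 𝕜 E _ x y

variable (𝕜) in
def TendstoWeakly (y : ι → E) (l : Filter ι) (w : E) : Prop :=
  ∀ x : E, Tendsto (fun i => ⟪y i, x⟫) l (𝓝 ⟪w, x⟫)

theorem TendstoWeakly.unique [l.NeBot] {y : ι → E} {w₁ w₂ : E}
    (h₁ : TendstoWeakly 𝕜 y l w₁) (h₂ : TendstoWeakly 𝕜 y l w₂) : w₁ = w₂ :=
  ext_inner_right 𝕜 fun x => tendsto_nhds_unique (h₁ x) (h₂ x)

theorem TendstoWeakly.congr_of_tendsto_norm_sub {y z : ι → E} {w : E}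
    (hy : TendstoWeakly 𝕜 y l w) (hzy : Tendsto (fun i => ‖z i - y i‖) l (𝓝 0)) :
    TendstoWeakly 𝕜 z l w := by
  intro x
  have hsmall : Tendsto (fun i => ⟪z i - y i, x⟫) l (𝓝 0) := by
    simpa using (tendsto_zero_iff_norm_tendsto_zero.mpr hzy).inner (tendsto_const_nhds (x := x))
  simpa [inner_sub_left] using (hy x).add hsmall

theorem LinearIsometryEquiv.tendsto_symm_apply {T : ι → E ≃ₗᵢ[𝕜] E} {S : E ≃ₗᵢ[𝕜] E}
    (hT : ∀ y, Tendsto (fun i => T i y) l (𝓝 (S y))) (x : E) :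
    Tendsto (fun i => (T i).symm x) l (𝓝 (S.symm x)) := by
  rw [tendsto_iff_norm_sub_tendsto_zero]
  have hnorm : ∀ i, ‖(T i).symm x - S.symm x‖ = ‖S (S.symm x) - T i (S.symm x)‖ := fun i => by
    rw [← (T i).norm_map, map_sub, LinearIsometryEquiv.apply_symm_apply,
      LinearIsometryEquiv.apply_symm_apply]
  simpa only [hnorm, norm_sub_rev] using
    (tendsto_iff_norm_sub_tendsto_zero.mp (hT (S.symm x)))

theorem TendstoWeakly.isometry_apply {T : ι → E ≃ₗᵢ[𝕜] E} {S : E ≃ₗᵢ[𝕜] E} {y : ι → E}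
    {w : E} {C : ℝ} (hT : ∀ y, Tendsto (fun i => T i y) l (𝓝 (S y)))
    (hy : TendstoWeakly 𝕜 y l w) (hC : ∀ i, ‖y i‖ ≤ C) :
    TendstoWeakly 𝕜 (fun i => T i (y i)) l (S w) := by
  intro x
  have hsmall : Tendsto (fun i => ⟪y i, (T i).symm x - S.symm x⟫) l (𝓝 0) := by
    refine squeeze_zero_norm (fun i => (norm_inner_le_norm _ _).trans
      (mul_le_mul_of_nonneg_right (hC i) (norm_nonneg _))) ?_
    simpa using (tendsto_iff_norm_sub_tendsto_zero.mp
      (LinearIsometryEquiv.tendsto_symm_apply hT x)).const_mul C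
  simpa [LinearIsometryEquiv.inner_map_eq_flip, inner_sub_right] using
    (hy (S.symm x)).add hsmall

end WeakConvergence

theorem stmt0_weak_limit_fixed_by_conjugate_limit_general
    (H : Type*) [NormedAddCommGroup H] [InnerProductSpace ℂ H]
    (G : Type*) [Group G] [TopologicalSpace G]
    (π : G →* (H ≃ₗᵢ[ℂ] H)) (hcont : ∀ v : H, Continuous fun g : G => π g v)
    (u g : ℕ → G) (h : G) (v w : H)
    (hu : Tendsto u atTop (𝓝 (1 : G)))
    (hconj : Tendsto (fun i => g i * u i * (g i)⁻¹) atTop (𝓝 h))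
    (hweak : ∀ x : H,
      Tendsto (fun i => @inner ℂ H _ (π (g i) v) x) atTop (𝓝 (@inner ℂ H _ w x))) :
    π h w = w := by
  have hweak' : TendstoWeakly ℂ (fun i => π (g i) v) atTop w := hweak
  have hconj_apply (i : ℕ) :
      π (g i * u i * (g i)⁻¹) (π (g i) v) = π (g i) (π (u i) v) := by
    simp only [map_mul, map_inv, LinearIsometryEquiv.coe_mul, LinearIsometryEquiv.coe_inv,
      Function.comp_apply, LinearIsometryEquiv.symm_apply_apply]
  have to_hw : TendstoWeakly ℂ (fun i => π (g i * u i * (g i)⁻¹) (π (g i) v)) atTop (π h w) :=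
    hweak'.isometry_apply (fun y => ((hcont y).tendsto h).comp hconj)
      (fun i => ((π (g i)).norm_map v).le)
  have to_w : TendstoWeakly ℂ (fun i => π (g i * u i * (g i)⁻¹) (π (g i) v)) atTop w := by
    refine hweak'.congr_of_tendsto_norm_sub ?_
    simp only [hconj_apply, ← map_sub, LinearIsometryEquiv.norm_map]
    simpa using (tendsto_iff_norm_sub_tendsto_zero.mp (((hcont v).tendsto 1).comp hu))
  exact to_hw.unique to_w

/-- **Lemma 1 (group-theoretic content).**
Let `G` be a topological group with a strongly continuous unitary representation `π`
on a complex Hilbert space `H`.  If `u i → 1` in `G`, the conjugates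
`g i * u i * (g i)⁻¹` converge to `h` in `G`, and `π (g i) v` converges weakly to `w`,
then `π h w = w`. -/
theorem stmt0_weak_limit_fixed_by_conjugate_limit
    (H : Type*) [NormedAddCommGroup H] [InnerProductSpace ℂ H] [CompleteSpace H]
    (G : Type*) [Group G] [TopologicalSpace G] [IsTopologicalGroup G]
    (π : G →* (H ≃ₗᵢ[ℂ] H)) (hcont : ∀ v : H, Continuous fun g : G => π g v)
    (u g : ℕ → G) (h : G) (v w : H)
    (hu : Tendsto u atTop (𝓝 (1 : G)))
    (hconj : Tendsto (fun i => g i * u i * (g i)⁻¹) atTop (𝓝 h))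
    (hweak : ∀ x : H,
      Tendsto (fun i => @inner ℂ H _ (π (g i) v) x) atTop (𝓝 (@inner ℂ H _ w x))) :
    π h w = w :=
  stmt0_weak_limit_fixed_by_conjugate_limit_general H G π hcont u g h v w hu hconj hweak
end

section
/- Let 𝔤 be a finite-dimensional real Lie algebra. Let (U_i) be a sequence in 𝔤 with U_i → 0, let (φ_i) be a sequence of Lie algebra automorphisms of 𝔤, and let X ∈ 𝔤. Assume that φ_i(U_i) → X in 𝔤. Then the adjoint map ad X : 𝔤 → 𝔤, given by (ad X)(Y) = [X, Y], is a nilpotent linear endomorphism of 𝔤. (Remark 3 of the paper, with Ad g_i replaced by the Lie algebra automorphisms it induces.) -/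
/-!
The characteristic polynomial of `ad Y` is invariant under automorphisms (since
`ad (φ Y) = φ ∘ ad Y ∘ φ⁻¹`) and depends continuously on `Y`. Passing to the limit along
`φ i (U i) → X` and `U i → 0` gives `charpoly (ad X) = charpoly (ad 0) = T ^ dim 𝔤`,
i.e. `ad X` is nilpotent.
-/

open Filter Topology Polynomial

theorem Filter.Tendsto.eq_of_invariant_continuous {α β ι : Type*} [TopologicalSpace α]
    [TopologicalSpace β] [T2Space β] {l : Filter ι} [l.NeBot] {g : α → β} (hg : Continuous g)
    {ψ : ι → α → α} (hinv : ∀ i x, g (ψ i x) = g x) {u : ι → α} {a b : α}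
    (hu : Tendsto u l (𝓝 a)) (hψu : Tendsto (fun i => ψ i (u i)) l (𝓝 b)) :
    g b = g a :=
  tendsto_nhds_unique (((hg.tendsto b).comp hψu).congr fun i => hinv i (u i))
    ((hg.tendsto a).comp hu)

theorem LinearMap.continuous_eval_charpoly_comp {𝕜 V M : Type*} [NontriviallyNormedField 𝕜]
    [CompleteSpace 𝕜] [AddCommGroup V] [Module 𝕜 V] [TopologicalSpace V]
    [IsTopologicalAddGroup V] [ContinuousSMul 𝕜 V] [T2Space V] [FiniteDimensional 𝕜 V]
    [AddCommGroup M] [Module 𝕜 M] [FiniteDimensional 𝕜 M]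
    (f : V →ₗ[𝕜] Module.End 𝕜 M) (t : 𝕜) :
    Continuous fun v => (f v).charpoly.eval t := by
  let b := Module.finBasis 𝕜 M
  have hmatrix : Continuous fun v => LinearMap.toMatrix b b (f v) :=
    ((LinearMap.toMatrix b b).toLinearMap ∘ₗ f).continuous_of_finiteDimensional
  simp_rw [← LinearMap.charpoly_toMatrix _ b, Matrix.eval_charpoly]
  exact (continuous_const.sub hmatrix).matrix_det

theorem LieAlgebra.charpoly_ad_lieEquiv_apply {R L : Type*} [CommRing R]
    [LieRing L] [LieAlgebra R L] [Module.Free R L] [Module.Finite R L]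
    (e : L ≃ₗ⁅R⁆ L) (x : L) :
    (ad R L (e x)).charpoly = (ad R L x).charpoly := by
  rw [← conj_ad_apply, LinearEquiv.charpoly_conj]

/-- **Remark 3.**
Let `𝔤` be a finite-dimensional real Lie algebra (with its canonical topology, pinned
down here as a Hausdorff topological vector-space topology, which is unique in finite
dimension).  If `U i → 0` in `𝔤`, the `φ i` are Lie algebra automorphisms of `𝔤`, and
`φ i (U i) → X`, then `ad X : 𝔤 → 𝔤` is a nilpotent endomorphism. -/
theorem stmt1_ad_nilpotent_of_automorphism_limit
    (L : Type*) [LieRing L] [LieAlgebra ℝ L]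
    [TopologicalSpace L] [IsTopologicalAddGroup L] [ContinuousSMul ℝ L] [T2Space L]
    [FiniteDimensional ℝ L]
    (U : ℕ → L) (hU : Tendsto U atTop (𝓝 (0 : L)))
    (φ : ℕ → (L ≃ₗ⁅ℝ⁆ L)) (X : L)
    (hlim : Tendsto (fun i => φ i (U i)) atTop (𝓝 X)) :
    IsNilpotent (LieAlgebra.ad ℝ L X) := by
  rw [LinearMap.isNilpotent_iff_charpoly]
  refine Polynomial.funext fun t => ?_
  have hcharpoly_eq :=
    hU.eq_of_invariant_continuous (LinearMap.continuous_eval_charpoly_comp _ t)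
      (fun i Y => congrArg (eval t) (LieAlgebra.charpoly_ad_lieEquiv_apply (φ i) Y)) hlim
  simpa using hcharpoly_eq
end

section
/- Let G be a topological group and let π be a strongly continuous unitary representation of G on a complex Hilbert space H. Let w ∈ H. Let (n_i) and (n'_i) be sequences in G each of whose terms fixes w (i.e. π(n_i)w = w and π(n'_i)w = w for all i), let (m_i) be a sequence in G converging to the identity, and assume that the products n_i m_i n'_i converge to an element a₀ of G. Then π(a₀)w = w. (The abstract content of Claim α in the proof of Proposition 6: the function f(s) = Re⟨π(s)w, w⟩ is bi-invariant under the elements fixing w, so f(a₀) = lim f(n_i m_i n'_i) = lim f(m_i) = f(1) = ‖w‖², and 2f(a₀) − 2f(1) = −‖π(a₀)w − w‖² forces π(a₀)w = w.) -/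
/-!
The matrix coefficient `f g = re ⟪π g w, w⟫` is continuous and invariant under multiplication,
on either side, by elements fixing `w`. Hence `f a₀ = lim f (n i * m i * n' i) = lim f (m i) = f 1
= ‖w‖²`, and since `‖π a₀ w - w‖² = 2 ‖w‖² - 2 f a₀` this forces `π a₀ w = w`.
-/

open Filter Topology RCLike

theorem apply_eq_apply_one_of_tendsto_mul_mul {ι G X : Type*} [Monoid G] [TopologicalSpace G]
    [TopologicalSpace X] [T2Space X] {l : Filter ι} [l.NeBot] {f : G → X}
    {n n' m : ι → G} {a₀ : G} (hfa₀ : ContinuousAt f a₀) (hf₁ : ContinuousAt f 1)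
    (hinv : ∀ i, f (n i * m i * n' i) = f (m i))
    (hm : Tendsto m l (𝓝 1)) (hprod : Tendsto (fun i => n i * m i * n' i) l (𝓝 a₀)) :
    f a₀ = f 1 :=
  tendsto_nhds_unique (by simpa only [Function.comp_def, hinv] using hfa₀.tendsto.comp hprod)
    (hf₁.tendsto.comp hm)

section InnerProductSpace

variable {𝕜 E : Type*} [RCLike 𝕜] [NormedAddCommGroup E] [InnerProductSpace 𝕜 E]

theorem LinearIsometry.apply_eq_self_of_re_inner_eq_norm_sq (U : E →ₗᵢ[𝕜] E) {w : E}
    (h : re (inner 𝕜 (U w) w) = ‖w‖ ^ 2) : U w = w := by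
  have : ‖U w - w‖ ^ 2 = 0 := by
    rw [@norm_sub_sq 𝕜, h, U.norm_map]
    ring
  simpa [sub_eq_zero] using this

theorem inner_map_mul_mul_of_apply_eq_self {G : Type*} [Monoid G] (π : G →* (E ≃ₗᵢ[𝕜] E))
    {w : E} {a b : G} (ha : π a w = w) (hb : π b w = w) (g : G) :
    inner 𝕜 (π (a * g * b) w) w = inner 𝕜 (π g w) w := by
  calc inner 𝕜 (π (a * g * b) w) w = inner 𝕜 (π a (π g w)) (π a w) := by simp [hb, ha]
    _ = inner 𝕜 (π g w) w := (π a).inner_map_map _ _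

end InnerProductSpace

theorem stmt9_limit_of_sandwiched_products_fixes_w_general
    (H : Type*) [NormedAddCommGroup H] [InnerProductSpace ℂ H]
    (G : Type*) [Group G] [TopologicalSpace G]
    (π : G →* (H ≃ₗᵢ[ℂ] H)) (hcont : ∀ v : H, Continuous fun g : G => π g v)
    (w : H) (n n' m : ℕ → G) (a₀ : G)
    (hn : ∀ i, π (n i) w = w) (hn' : ∀ i, π (n' i) w = w)
    (hm : Tendsto m atTop (𝓝 (1 : G)))
    (hprod : Tendsto (fun i => n i * m i * n' i) atTop (𝓝 a₀)) :
    π a₀ w = w := by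
  set f : G → ℝ := fun g => re (inner ℂ (π g w) w)
  have hf : Continuous f := continuous_re.comp ((hcont w).inner continuous_const)
  have hf_one : f 1 = ‖w‖ ^ 2 := by simp only [f, map_one]; exact inner_self_eq_norm_sq w
  have hf_a₀ : f a₀ = f 1 :=
    apply_eq_apply_one_of_tendsto_mul_mul hf.continuousAt hf.continuousAt
      (fun i => by simp only [f, inner_map_mul_mul_of_apply_eq_self π (hn i) (hn' i)]) hm hprod
  exact (π a₀).toLinearIsometry.apply_eq_self_of_re_inner_eq_norm_sq (hf_a₀.trans hf_one)

/-- **Claim α in the proof of Proposition 6 (abstract form).**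
Let `π` be a strongly continuous unitary representation of a topological group `G` on a
complex Hilbert space `H`, and `w ∈ H`.  If `π (n i) w = w` and `π (n' i) w = w` for all
`i`, `m i → 1` in `G`, and `n i * m i * n' i → a₀`, then `π a₀ w = w`. -/
theorem stmt9_limit_of_sandwiched_products_fixes_w
    (H : Type*) [NormedAddCommGroup H] [InnerProductSpace ℂ H] [CompleteSpace H]
    (G : Type*) [Group G] [TopologicalSpace G] [IsTopologicalGroup G]
    (π : G →* (H ≃ₗᵢ[ℂ] H)) (hcont : ∀ v : H, Continuous fun g : G => π g v)
    (w : H) (n n' m : ℕ → G) (a₀ : G)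
    (hn : ∀ i, π (n i) w = w) (hn' : ∀ i, π (n' i) w = w)
    (hm : Tendsto m atTop (𝓝 (1 : G)))
    (hprod : Tendsto (fun i => n i * m i * n' i) atTop (𝓝 a₀)) :
    π a₀ w = w :=
  stmt9_limit_of_sandwiched_products_fixes_w_general H G π hcont w n n' m a₀ hn hn' hm hprod
end

section
/- Let 𝔰 be a finite-dimensional simple real Lie algebra and let T ∈ 𝔰 with T ≠ 0. Assume that ad T : 𝔰 → 𝔰 is diagonalizable over ℝ. Then the Lie subalgebra of 𝔰 generated by the image (ad T)(𝔰) is all of 𝔰. (The concluding argument of the proof of Proposition 6: with 𝔰_λ the λ-eigenspace of ad T, the subalgebra 𝔰' generated by 𝔰_* = Σ_{λ≠0} 𝔰_λ = (ad T)(𝔰) is normalized by 𝔰₀ = c_𝔰(T) and by 𝔰_*, hence is a nonzero ideal, hence equals 𝔰 by simplicity.) -/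
/-!
Let `S` be the Lie subalgebra generated by the image of `ad T`. An eigenvector of `ad T` with a
nonzero eigenvalue lies in the image, hence in `S`; one with eigenvalue zero commutes with `T`,
so its adjoint action, a derivation, maps the generators `⁅T, Y⁆` to generators `⁅T, ⁅z, Y⁆⁆`
and therefore preserves `S`. Since the eigenvectors span, `S` is an ideal. It is nonzero because
`T` is not central, so `S` is everything by simplicity.
-/

open Set LieAlgebra

namespace LieSubalgebra

section CommRing

variable {R L : Type*} [CommRing R] [LieRing L] [LieAlgebra R L]

theorem mem_normalizer_lieSpan_of_forall_lie_mem {s : Set L} {z : L}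
    (h : ∀ y ∈ s, ⁅z, y⁆ ∈ lieSpan R L s) : z ∈ (lieSpan R L s).normalizer := by
  rw [mem_normalizer_iff]
  intro x hx
  induction hx using lieSpan_induction with
  | mem y hy => exact h y hy
  | zero => rw [lie_zero]; exact zero_mem _
  | add _ _ _ _ hu hv => rw [lie_add]; exact add_mem hu hv
  | smul t _ _ hu => rw [lie_smul]; exact SMulMemClass.smul_mem t hu
  | lie u v hu hv hzu hzv =>
    rw [leibniz_lie]
    exact add_mem (lie_mem _ hzu hv) (lie_mem _ hu hzv)

theorem mem_normalizer_lieSpan_range_lie_of_lie_eq_zero {T z : L} (h : ⁅T, z⁆ = 0) :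
    z ∈ (lieSpan R L (range fun Y => ⁅T, Y⁆)).normalizer := by
  refine mem_normalizer_lieSpan_of_forall_lie_mem ?_
  rintro _ ⟨Y, rfl⟩
  have hzT : ⁅z, T⁆ = 0 := by rw [← lie_skew, h, neg_zero]
  rw [leibniz_lie, hzT, zero_lie, zero_add]
  exact subset_lieSpan (mem_range_self _)

theorem lieSpan_range_lie_ne_bot [LieModule.IsFaithful R L L] {T : L} (hT : T ≠ 0) :
    lieSpan R L (range fun Y => ⁅T, Y⁆) ≠ ⊥ := by
  intro h
  refine hT (LieModule.ext_of_isFaithful (R := R) L fun Y => ?_)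
  simpa [h] using subset_lieSpan (R := R) (L := L) (mem_range_self (f := fun Y => ⁅T, Y⁆) Y)

end CommRing

section Field

variable {K L : Type*} [Field K] [LieRing L] [LieAlgebra K L]

theorem eigenspace_ad_le_normalizer_lieSpan_range_lie (T : L) (μ : K) :
    (ad K L T).eigenspace μ ≤ (lieSpan K L (range fun Y => ⁅T, Y⁆)).normalizer.toSubmodule := by
  intro z hz
  replace hz : ⁅T, z⁆ = μ • z := Module.End.mem_eigenspace_iff.mp hz
  rcases eq_or_ne μ 0 with rfl | hμ
  · exact mem_normalizer_lieSpan_range_lie_of_lie_eq_zero (by rw [hz, zero_smul])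
  · have hz_eq : z = μ⁻¹ • ⁅T, z⁆ := by rw [hz, smul_smul, inv_mul_cancel₀ hμ, one_smul]
    refine le_normalizer _ ?_
    rw [hz_eq]
    exact SMulMemClass.smul_mem _ (subset_lieSpan (mem_range_self z))

theorem normalizer_lieSpan_range_lie_eq_top {T : L}
    (h : (⨆ μ : K, (ad K L T).eigenspace μ) = ⊤) :
    (lieSpan K L (range fun Y => ⁅T, Y⁆)).normalizer = ⊤ := by
  rw [← toSubmodule_inj, top_toSubmodule, eq_top_iff, ← h]
  exact iSup_le (eigenspace_ad_le_normalizer_lieSpan_range_lie T)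

end Field

end LieSubalgebra

theorem LieAlgebra.IsSimple.eq_bot_or_eq_top_of_normalizer_eq_top {R L : Type*} [CommRing R]
    [LieRing L] [LieAlgebra R L] [IsSimple R L] {H : LieSubalgebra R L}
    (h : H.normalizer = ⊤) : H = ⊥ ∨ H = ⊤ := by
  obtain ⟨I, rfl⟩ := (H.exists_lieIdeal_coe_eq_iff).mpr fun x y hy =>
    (H.mem_normalizer_iff x).mp (h ▸ LieSubalgebra.mem_top x) y hy
  rcases IsSimple.eq_bot_or_eq_top I with rfl | rfl
  · left; ext; simp
  · right; exact LieIdeal.top_toLieSubalgebra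

theorem stmt11_span_of_ad_image_eq_top_general
    (L : Type*) [LieRing L] [LieAlgebra ℝ L]
    [LieAlgebra.IsSimple ℝ L]
    (T : L) (hT : T ≠ 0)
    (hdiag : (⨆ μ : ℝ, Module.End.eigenspace (LieAlgebra.ad ℝ L T) μ) = ⊤) :
    LieSubalgebra.lieSpan ℝ L (Set.range fun Y : L => ⁅T, Y⁆) = ⊤ :=
  (IsSimple.eq_bot_or_eq_top_of_normalizer_eq_top
    (LieSubalgebra.normalizer_lieSpan_range_lie_eq_top hdiag)).resolve_left
    (LieSubalgebra.lieSpan_range_lie_ne_bot hT)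

/-- **Concluding argument of the proof of Proposition 6.**
Let `𝔰` be a finite-dimensional simple real Lie algebra and `T ≠ 0` with
`ad T` diagonalizable over `ℝ` (the eigenspaces of `ad T` span `𝔰`).  Then the Lie
subalgebra of `𝔰` generated by the image `(ad T)(𝔰)` is all of `𝔰`. -/
theorem stmt11_span_of_ad_image_eq_top
    (L : Type*) [LieRing L] [LieAlgebra ℝ L] [Module.Finite ℝ L]
    [LieAlgebra.IsSimple ℝ L]
    (T : L) (hT : T ≠ 0)
    (hdiag : (⨆ μ : ℝ, Module.End.eigenspace (LieAlgebra.ad ℝ L T) μ) = ⊤) :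
    LieSubalgebra.lieSpan ℝ L (Set.range fun Y : L => ⁅T, Y⁆) = ⊤ :=
  stmt11_span_of_ad_image_eq_top_general L T hT hdiag
end
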